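/- arXiv:2510.06851 — 5 statements merged into one kernel-verified Lean document; each statement's English description precedes it below -/
import Mathlib

section
/- For every Φ ∈ ℝ^m, the average of the randomized alternating phase sequences under the product distribution on index tuples equals the deterministic sequence: Σ_{κ ∈ {1,…,L}^m} (∏_{j=1}^m λ_{κ_j}) · U_Φ^{(κ)} = U_Φ. -/
open Matrix

/-- For an N×N matrix `A`, the 2N×2N block matrix `[[c·I, s·A],[s·A†, −c·I]]`. -/
noncomputable def embedMat (N : ℕ) (c s : ℝ) (A : Matrix (Fin N) (Fin N) ℂ) :
    Matrix (Fin N ⊕ Fin N) (Fin N ⊕ Fin N) ℂ :=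
  Matrix.fromBlocks ((c : ℂ) • 1) ((s : ℂ) • A) ((s : ℂ) • Aᴴ) (-((c : ℂ) • 1))

/-- The unitary `e^{iφ(2Π̃−I)} = [[e^{iφ}·I, 0],[0, e^{−iφ}·I]]`. -/
noncomputable def phasePlus (N : ℕ) (φ : ℝ) : Matrix (Fin N ⊕ Fin N) (Fin N ⊕ Fin N) ℂ :=
  Matrix.fromBlocks (Complex.exp (Complex.I * φ) • 1) 0 0 (Complex.exp (-(Complex.I * φ)) • 1)

/-- The unitary `e^{iφ(2Π−I)} = [[e^{−iφ}·I, 0],[0, e^{iφ}·I]]`. -/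
noncomputable def phaseMinus (N : ℕ) (φ : ℝ) : Matrix (Fin N ⊕ Fin N) (Fin N ⊕ Fin N) ℂ :=
  Matrix.fromBlocks (Complex.exp (-(Complex.I * φ)) • 1) 0 0 (Complex.exp (Complex.I * φ) • 1)

/-- The alternating phase sequence built from matrices `V 0, …, V (m−1)` (1-indexed as
`V_1, …, V_m`): for even `m` it is
`∏_{j=1}^{m/2} (e^{iφ_{2j−1}(2Π−I)}·V_{2j−1}ᴴ·e^{iφ_{2j}(2Π̃−I)}·V_{2j})` and for odd `m` it is
`e^{iφ_1(2Π̃−I)}·V_1·∏_{j=1}^{(m−1)/2} (e^{iφ_{2j}(2Π−I)}·V_{2j}ᴴ·e^{iφ_{2j+1}(2Π̃−I)}·V_{2j+1})`;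
equivalently, the position-`p` factor (for `p = 1,…,m`) is `e^{iφ_p(2Π̃−I)}·V_p` when `m − p`
is even and `e^{iφ_p(2Π−I)}·V_pᴴ` when `m − p` is odd, multiplied left to right. -/
noncomputable def phaseSeq (N m : ℕ) (φ : Fin m → ℝ)
    (V : Fin m → Matrix (Fin N ⊕ Fin N) (Fin N ⊕ Fin N) ℂ) :
    Matrix (Fin N ⊕ Fin N) (Fin N ⊕ Fin N) ℂ :=
  ((List.finRange m).map fun j =>
      if (m - (j.val + 1)) % 2 = 0 then phasePlus N (φ j) * V j
      else phaseMinus N (φ j) * (V j)ᴴ).prod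

/-!
Each factor of the alternating sequence depends real-linearly on its matrix (the weights are
real, so they commute with `ᴴ`), hence by noncommutative distributivity the product of the
averaged factors is the weighted sum over index tuples of the products. Since the weights sum
to one and the block embedding `embedMat` is affine, the averaged factor built from the `U_k`
is the one built from `U`.
-/

theorem sum_smul_prod_map_finRange {R A ι : Type*} [CommSemiring R] [Semiring A]
    [Algebra R A] [Fintype ι] (w : ι → R) :
    ∀ {n : ℕ} (f : Fin n → ι → A),
    ∑ κ : Fin n → ι, (∏ j, w (κ j)) • ((List.finRange n).map fun j => f j (κ j)).prod
      = ((List.finRange n).map fun j => ∑ k, w k • f j k).prod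
  | 0, f => by simp
  | n + 1, f => by
    rw [← (Fin.consEquiv fun _ => ι).sum_comp, Fintype.sum_prod_type]
    simp only [Fin.consEquiv_apply, Fin.prod_univ_succ, Fin.cons_zero, Fin.cons_succ,
      List.finRange_succ, List.map_cons, List.map_map, List.prod_cons, Function.comp_def,
      ← smul_mul_smul_comm]
    rw [← sum_smul_prod_map_finRange w fun j => f j.succ, Finset.sum_mul_sum]

theorem embedMat_sum_smul {ι : Type*} [Fintype ι] (N : ℕ) (c s : ℝ) (w : ι → ℝ)
    (hw : ∑ k, w k = 1) (A : ι → Matrix (Fin N) (Fin N) ℂ) :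
    ∑ k, (w k : ℂ) • embedMat N c s (A k) = embedMat N c s (∑ k, (w k : ℂ) • A k) := by
  have hw' : ∑ k, (w k : ℂ) = 1 := by exact_mod_cast hw
  ext (i | i) (j | j)
  · simp [embedMat, Matrix.sum_apply, ← Finset.sum_mul, hw']
  · simp [embedMat, Matrix.sum_apply, Finset.mul_sum, mul_left_comm]
  · simp [embedMat, Matrix.sum_apply, Matrix.conjTranspose_sum, Finset.mul_sum, mul_left_comm]
  · simp [embedMat, Matrix.sum_apply, ← Finset.sum_mul, hw']

noncomputable def phaseFactor (N m : ℕ) (φ : Fin m → ℝ) (j : Fin m)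
    (V : Matrix (Fin N ⊕ Fin N) (Fin N ⊕ Fin N) ℂ) : Matrix (Fin N ⊕ Fin N) (Fin N ⊕ Fin N) ℂ :=
  if (m - (j.val + 1)) % 2 = 0 then phasePlus N (φ j) * V else phaseMinus N (φ j) * Vᴴ

theorem phaseSeq_eq_prod_phaseFactor (N m : ℕ) (φ : Fin m → ℝ)
    (V : Fin m → Matrix (Fin N ⊕ Fin N) (Fin N ⊕ Fin N) ℂ) :
    phaseSeq N m φ V = ((List.finRange m).map fun j => phaseFactor N m φ j (V j)).prod :=
  rfl

theorem sum_smul_phaseFactor {ι : Type*} [Fintype ι] (N m : ℕ) (φ : Fin m → ℝ) (j : Fin m)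
    (w : ι → ℝ) (V : ι → Matrix (Fin N ⊕ Fin N) (Fin N ⊕ Fin N) ℂ) :
    ∑ k, (w k : ℂ) • phaseFactor N m φ j (V k) = phaseFactor N m φ j (∑ k, (w k : ℂ) • V k) := by
  unfold phaseFactor
  split_ifs <;> simp [Finset.mul_sum, Matrix.conjTranspose_sum]

theorem sum_smul_phaseSeq {ι : Type*} [Fintype ι] (N m : ℕ) (φ : Fin m → ℝ) (w : ι → ℝ)
    (V : ι → Matrix (Fin N ⊕ Fin N) (Fin N ⊕ Fin N) ℂ) :
    ∑ κ : Fin m → ι, ((∏ j, w (κ j) : ℝ) : ℂ) • phaseSeq N m φ (fun j => V (κ j))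
      = phaseSeq N m φ (fun _ => ∑ k, (w k : ℂ) • V k) := by
  simp only [phaseSeq_eq_prod_phaseFactor, Complex.ofReal_prod]
  rw [sum_smul_prod_map_finRange (fun k => (w k : ℂ)) fun j k => phaseFactor N m φ j (V k)]
  simp only [sum_smul_phaseFactor]

theorem stmt2_general (N L m : ℕ)
    (Hk : Fin L → Matrix (Fin N) (Fin N) ℂ)
    (lam : Fin L → ℝ) (hsum : ∑ k, lam k = 1)
    (c s : ℝ) (φ : Fin m → ℝ) :
    ∑ κ : Fin m → Fin L, (((∏ j, lam (κ j)) : ℝ) : ℂ) •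
        phaseSeq N m φ (fun j => embedMat N c s (Hk (κ j)))
      = phaseSeq N m φ (fun _ => embedMat N c s (∑ k, ((lam k : ℝ) : ℂ) • Hk k)) := by
  rw [sum_smul_phaseSeq N m φ lam fun k => embedMat N c s (Hk k),
    embedMat_sum_smul N c s lam hsum]

/-- for unitaries `H_1,…,H_L` and weights `λ_k ≥ 0` with `Σ_k λ_k = 1`,
setting `H = Σ_k λ_k·H_k`, `U_k = [[c·I, s·H_k],[s·H_k†, −c·I]]` and
`U = [[c·I, s·H],[s·H†, −c·I]]`, for every `Φ ∈ ℝ^m` the average of the randomized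
alternating phase sequences under the product distribution on index tuples equals the
deterministic sequence:
`Σ_{κ ∈ {1,…,L}^m} (∏_{j=1}^m λ_{κ_j})·U_Φ^{(κ)} = U_Φ`. -/
theorem stmt2 (N L m : ℕ) (hN : 1 ≤ N) (hL : 1 ≤ L) (hm : 1 ≤ m)
    (Hk : Fin L → Matrix (Fin N) (Fin N) ℂ)
    (hunit : ∀ k, Hk k ∈ Matrix.unitaryGroup (Fin N) ℂ)
    (lam : Fin L → ℝ) (hlam : ∀ k, 0 ≤ lam k) (hsum : ∑ k, lam k = 1)
    (c s : ℝ) (φ : Fin m → ℝ) :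
    ∑ κ : Fin m → Fin L, (((∏ j, lam (κ j)) : ℝ) : ℂ) •
        phaseSeq N m φ (fun j => embedMat N c s (Hk (κ j)))
      = phaseSeq N m φ (fun _ => embedMat N c s (∑ k, ((lam k : ℝ) : ℂ) • Hk k)) :=
  stmt2_general N L m Hk lam hsum c s φ
end

section
/- The integers r_1, …, r_m are strictly decreasing: r_1 > r_2 > ⋯ > r_m. In particular the r_j, and hence the sample points s_j = t/r_j, are pairwise distinct. -/
/-- `K = max{m/π, 2t/s}`. -/
noncomputable def Kval (m : ℕ) (t s : ℝ) : ℝ := max ((m : ℝ) / Real.pi) (2 * t / s)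

/-- `r_j = ⌈K / sin²(π(2j−1)/(8m))⌉` for `j ∈ {1,…,m}`. -/
noncomputable def rval (m : ℕ) (t s : ℝ) (j : ℕ) : ℕ :=
  ⌈Kval m t s / Real.sin (Real.pi * (2 * (j : ℝ) - 1) / (8 * (m : ℝ))) ^ 2⌉₊

/-- The sample point `s_j = t / r_j`. -/
noncomputable def sval (m : ℕ) (t s : ℝ) (j : ℕ) : ℝ := t / (rval m t s j : ℝ)

/-- The Richardson coefficient `b_j = ∏_{ℓ ∈ {1,…,m}, ℓ≠j} 1/(1 − r_ℓ/r_j)`. -/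
noncomputable def bval (m : ℕ) (t s : ℝ) (j : ℕ) : ℝ :=
  ∏ l ∈ (Finset.Icc 1 m).erase j, (1 - (rval m t s l : ℝ) / (rval m t s j : ℝ))⁻¹

/-!
Writing `θ_j = π(2j−1)/(8m)`, the map `x ↦ 1/sin² x + 4x` is antitone on `(0, π/4]`, because its
derivative `4 − 2cos x / sin³ x` is nonpositive there. Consecutive angles are `π/(4m)` apart, so
`K/sin² θ_j − K/sin² θ_{j+1} ≥ Kπ/m ≥ 1`, and a gap of at least one survives taking ceilings.
-/

open Real Set

lemma antitoneOn_inv_sin_sq_add_four_mul :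
    AntitoneOn (fun x => (sin x ^ 2)⁻¹ + 4 * x) (Ioc 0 (π / 4)) := by
  have hsin_pos : ∀ x ∈ Ioc 0 (π / 4), 0 < sin x := fun x hx =>
    sin_pos_of_pos_of_lt_pi hx.1 (by linarith [hx.2, pi_pos])
  have hderiv : ∀ x ∈ Ioc 0 (π / 4), HasDerivAt (fun x => (sin x ^ 2)⁻¹ + 4 * x)
      (-(2 * sin x * cos x) / (sin x ^ 2) ^ 2 + 4) x := fun x hx => by
    refine ((((hasDerivAt_sin x).pow 2).inv (pow_ne_zero 2 (hsin_pos x hx).ne')).add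
      ((hasDerivAt_id x).const_mul 4)).congr_deriv ?_
    norm_num
  refine antitoneOn_of_deriv_nonpos (convex_Ioc 0 (π / 4))
    (fun x hx => (hderiv x hx).continuousAt.continuousWithinAt) ?_ ?_
  · rw [interior_Ioc]
    exact fun x hx => (hderiv x (Ioo_subset_Ioc_self hx)).differentiableAt.differentiableWithinAt
  · rw [interior_Ioc]
    intro x hx
    rw [(hderiv x (Ioo_subset_Ioc_self hx)).deriv]
    have hs := hsin_pos x (Ioo_subset_Ioc_self hx)
    have hc : 0 ≤ cos x :=
      cos_nonneg_of_mem_Icc ⟨by linarith [hx.1, pi_pos], by linarith [hx.2, pi_pos]⟩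
    -- `cos 2x ≥ 0` gives `2 sin² x ≤ 1` and `sin x ≤ cos x`, hence `2 sin³ x ≤ cos x`
    have hs2 : 2 * sin x ^ 2 ≤ 1 := by
      have := cos_nonneg_of_mem_Icc (x := 2 * x) ⟨by linarith [hx.1, pi_pos], by linarith [hx.2]⟩
      rw [cos_two_mul_eq_one_sub] at this
      linarith
    have hsc : sin x ≤ cos x := by nlinarith [sin_sq_add_cos_sq x]
    rw [div_add' _ _ _ (by positivity), div_nonpos_iff]
    exact Or.inr ⟨by nlinarith, by positivity⟩

lemma four_mul_sub_le_inv_sin_sq_sub_inv_sin_sq {x y : ℝ} (hx : 0 < x) (hxy : x ≤ y)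
    (hy : y ≤ π / 4) : 4 * (y - x) ≤ (sin x ^ 2)⁻¹ - (sin y ^ 2)⁻¹ := by
  have := antitoneOn_inv_sin_sq_add_four_mul ⟨hx, hxy.trans hy⟩ ⟨hx.trans_le hxy, hy⟩ hxy
  simp only at this
  linarith

lemma natCeil_div_sin_sq_lt {K x y : ℝ} (hx : 0 < x) (hxy : x ≤ y) (hy : y ≤ π / 4)
    (hK : 1 ≤ 4 * K * (y - x)) : ⌈K / sin y ^ 2⌉₊ < ⌈K / sin x ^ 2⌉₊ := by
  have hgap := four_mul_sub_le_inv_sin_sq_sub_inv_sin_sq hx hxy hy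
  have hK_pos : 0 < K := by nlinarith
  have hle : K / sin y ^ 2 + 1 ≤ K / sin x ^ 2 := by
    rw [div_eq_mul_inv, div_eq_mul_inv]
    nlinarith
  rw [← Nat.cast_lt (α := ℝ)]
  calc (⌈K / sin y ^ 2⌉₊ : ℝ) < K / sin y ^ 2 + 1 := Nat.ceil_lt_add_one (by positivity)
    _ ≤ K / sin x ^ 2 := hle
    _ ≤ ⌈K / sin x ^ 2⌉₊ := Nat.le_ceil _

lemma rval_add_one_lt (m : ℕ) (t s : ℝ) {j : ℕ} (hj : 1 ≤ j) (hjm : j + 1 ≤ m) :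
    rval m t s (j + 1) < rval m t s j := by
  have hm : (0 : ℝ) < m := by norm_cast; omega
  have hj' : (1 : ℝ) ≤ j := by exact_mod_cast hj
  have hjm' : (j : ℝ) + 1 ≤ m := by exact_mod_cast hjm
  have hK : (m : ℝ) / π ≤ Kval m t s := le_max_left _ _
  refine natCeil_div_sin_sq_lt ?_ ?_ ?_ ?_
  · exact div_pos (mul_pos pi_pos (by linarith)) (by positivity)
  · gcongr; linarith
  · rw [div_le_div_iff₀ (by positivity) (by norm_num)]
    push_cast
    nlinarith [pi_pos]
  · have hdiff : π * (2 * ((j + 1 : ℕ) : ℝ) - 1) / (8 * m) - π * (2 * j - 1) / (8 * m)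
        = π / (4 * m) := by
      push_cast; field_simp; ring
    rw [div_le_iff₀ pi_pos] at hK
    rw [hdiff, mul_div_assoc', le_div_iff₀ (by positivity)]
    linarith

lemma strictAntiOn_rval (m : ℕ) (t s : ℝ) : StrictAntiOn (rval m t s) (Icc 1 m) :=
  strictAntiOn_of_add_one_lt ordConnected_Icc fun _ _ hj hj₁ => rval_add_one_lt m t s hj.1 hj₁.2

theorem stmt6_general (m : ℕ) (t s : ℝ) (ht : 0 < t) :
    (∀ j j' : ℕ, 1 ≤ j → j < j' → j' ≤ m → rval m t s j' < rval m t s j) ∧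
    (∀ j ∈ Finset.Icc 1 m, ∀ j' ∈ Finset.Icc 1 m, j ≠ j' → rval m t s j ≠ rval m t s j') ∧
    (∀ j ∈ Finset.Icc 1 m, ∀ j' ∈ Finset.Icc 1 m, j ≠ j' → sval m t s j ≠ sval m t s j') := by
  have hinj : ∀ j ∈ Finset.Icc 1 m, ∀ j' ∈ Finset.Icc 1 m, j ≠ j' →
      rval m t s j ≠ rval m t s j' := fun j hj j' hj' hne =>
    mt ((strictAntiOn_rval m t s).injOn (Finset.mem_Icc.mp hj) (Finset.mem_Icc.mp hj')) hne
  refine ⟨fun j j' hj hjj' hj'm => strictAntiOn_rval m t s ⟨hj, by omega⟩ ⟨by omega, hj'm⟩ hjj',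
    hinj, fun j hj j' hj' hne hs => hinj j hj j' hj' hne ?_⟩
  rw [sval, sval, div_eq_mul_inv, div_eq_mul_inv] at hs
  exact_mod_cast inv_injective (mul_left_cancel₀ ht.ne' hs)

/-- the integers `r_1 > r_2 > ⋯ > r_m` are strictly decreasing; in particular
the `r_j`, and hence the sample points `s_j = t/r_j`, are pairwise distinct. -/
theorem stmt6 (m : ℕ) (hm : 1 ≤ m) (t s : ℝ) (ht : 0 < t) (hs : s ∈ Set.Ioo (0:ℝ) 1) :
    (∀ j j' : ℕ, 1 ≤ j → j < j' → j' ≤ m → rval m t s j' < rval m t s j) ∧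
    (∀ j ∈ Finset.Icc 1 m, ∀ j' ∈ Finset.Icc 1 m, j ≠ j' → rval m t s j ≠ rval m t s j') ∧
    (∀ j ∈ Finset.Icc 1 m, ∀ j' ∈ Finset.Icc 1 m, j ≠ j' → sval m t s j ≠ sval m t s j') :=
  stmt6_general m t s ht
end

section
/- Let s ∈ (0,1/2) and let k ≥ 1 be an integer. Then |z/√(1−z²) − S_k(z)| ≤ s^{2k+1} for every real z with |z| ≤ s. Consequently, for every ε ∈ (0,1), if k ≥ log(1/ε)/(2·log(1/s)) then |z/√(1−z²) − S_k(z)| ≤ ε for all z ∈ [−s, s]. -/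
/-!
Since `c_m = (1/2)(3/2)⋯(m - 1/2)/m!`, the binomial series gives `Σ c_m t^m = (1 - t)^(-1/2)`
for `|t| < 1`; putting `t = z²` and multiplying by `z` expands `z/√(1−z²)`. The ratio
`c_{m+1}/c_m = (m + 1/2)/(m + 1)` is below `1`, so `c_m ≤ c_1 = 1/2` for `m ≥ 1`, and the tail
after `k` terms is at most `|z|^{2k+1} / (2(1 − z²)) ≤ |z|^{2k+1}` once `z² ≤ 1/2`.
The second claim is `s^{2k} ≤ ε`, the hypothesis on `k` after taking logarithms.
-/

/-- The Taylor coefficient `c_m = (2m)!/(4^m·(m!)²)` of `z/√(1−z²) = Σ_m c_m·z^{2m+1}`. -/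
noncomputable def cm (m : ℕ) : ℝ :=
  (Nat.factorial (2 * m) : ℝ) / (4 ^ m * (Nat.factorial m : ℝ) ^ 2)

/-- The order-`k` truncation `S_k(z) = Σ_{m=0}^{k−1} c_m·z^{2m+1}` of the series of `z/√(1−z²)`. -/
noncomputable def Sk (k : ℕ) (z : ℝ) : ℝ := ∑ m ∈ Finset.range k, cm m * z ^ (2 * m + 1)

lemma cm_zero : cm 0 = 1 := by simp [cm]

lemma cm_succ (m : ℕ) : cm (m + 1) = cm m * ((m + 1 / 2) / (m + 1)) := by
  rw [cm, cm, show 2 * (m + 1) = 2 * m + 1 + 1 by ring, Nat.factorial_succ, Nat.factorial_succ,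
    Nat.factorial_succ]
  push_cast
  field_simp
  ring

lemma factorial_mul_cm (n : ℕ) : (n.factorial : ℝ) * cm n = (ascPochhammer ℝ n).eval (1 / 2) := by
  induction n with
  | zero => simp [cm_zero]
  | succ n ih =>
    rw [ascPochhammer_succ_eval, ← ih, cm_succ, Nat.factorial_succ]
    push_cast
    field_simp
    ring

lemma multichoose_half_eq_cm (n : ℕ) : Ring.multichoose (1 / 2 : ℝ) n = cm n := by
  have h := Ring.factorial_nsmul_multichoose_eq_ascPochhammer (1 / 2 : ℝ) n
  rw [Polynomial.ascPochhammer_smeval_eq_eval, nsmul_eq_mul, ← factorial_mul_cm] at h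
  exact mul_left_cancel₀ (by positivity) h

lemma hasSum_cm_mul_pow {t : ℝ} (ht : |t| < 1) :
    HasSum (fun n ↦ cm n * t ^ n) (1 / √(1 - t)) := by
  have h := (Real.one_div_one_sub_rpow_hasFPowerSeriesOnBall_zero (1 / 2)).hasSum
    (y := t) (by simpa [enorm_eq_nnnorm, ← NNReal.coe_lt_coe] using ht)
  simp only [FormalMultilinearSeries.ofScalars_apply_eq, zero_add, ← Ring.multichoose_eq,
    multichoose_half_eq_cm, smul_eq_mul] at h
  rwa [Real.sqrt_eq_rpow]

lemma hasSum_cm_mul_pow_odd {z : ℝ} (hz : |z| < 1) :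
    HasSum (fun m ↦ cm m * z ^ (2 * m + 1)) (z / √(1 - z ^ 2)) := by
  have hz2 : |z ^ 2| < 1 := by rw [abs_pow, sq_lt_one_iff₀ (abs_nonneg z)]; exact hz
  have h := (hasSum_cm_mul_pow hz2).mul_left z
  rw [mul_one_div] at h
  have e : (fun m ↦ z * (cm m * (z ^ 2) ^ m)) = fun m ↦ cm m * z ^ (2 * m + 1) :=
    funext fun m ↦ by ring
  rwa [e] at h

lemma cm_nonneg (m : ℕ) : 0 ≤ cm m := by unfold cm; positivity

lemma cm_antitone : Antitone cm := by
  refine antitone_nat_of_succ_le fun m ↦ ?_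
  rw [cm_succ]
  exact mul_le_of_le_one_right (cm_nonneg m) ((div_le_one (by positivity)).2 (by linarith))

lemma cm_le_half {m : ℕ} (hm : 1 ≤ m) : cm m ≤ 1 / 2 := by
  simpa [cm_succ, cm_zero] using cm_antitone hm

lemma abs_div_sqrt_sub_Sk_le {z : ℝ} (hz : z ^ 2 ≤ 1 / 2) {k : ℕ} (hk : 1 ≤ k) :
    |z / √(1 - z ^ 2) - Sk k z| ≤ |z| ^ (2 * k + 1) := by
  have hz1 : |z| < 1 := by rw [← sq_lt_one_iff₀ (abs_nonneg z), sq_abs]; linarith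
  have hf := hasSum_cm_mul_pow_odd hz1
  have htail : z / √(1 - z ^ 2) - Sk k z = ∑' m, cm (m + k) * z ^ (2 * (m + k) + 1) := by
    rw [← hf.tsum_eq, ← hf.summable.sum_add_tsum_nat_add k, Sk, add_sub_cancel_left]
  have hgeom : HasSum (fun m : ℕ ↦ |z| ^ (2 * k + 1) / 2 * (z ^ 2) ^ m)
      (|z| ^ (2 * k + 1) / 2 * (1 - z ^ 2)⁻¹) :=
    (hasSum_geometric_of_lt_one (sq_nonneg z) (by linarith)).mul_left _
  have hterm (m : ℕ) :
      ‖cm (m + k) * z ^ (2 * (m + k) + 1)‖ ≤ |z| ^ (2 * k + 1) / 2 * (z ^ 2) ^ m := by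
    rw [Real.norm_eq_abs, abs_mul, abs_of_nonneg (cm_nonneg _), abs_pow, ← sq_abs z, ← pow_mul,
      show 2 * (m + k) + 1 = 2 * k + 1 + 2 * m by ring, pow_add]
    calc _ ≤ 1 / 2 * (|z| ^ (2 * k + 1) * |z| ^ (2 * m)) := by
          gcongr; exact cm_le_half (by omega)
      _ = _ := by ring
  have hinv : (1 - z ^ 2)⁻¹ ≤ 2 := by
    rw [inv_le_comm₀ (by linarith) (by norm_num)]; linarith
  rw [htail]
  calc _ ≤ |z| ^ (2 * k + 1) / 2 * (1 - z ^ 2)⁻¹ := tsum_of_norm_bounded hgeom hterm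
    _ ≤ |z| ^ (2 * k + 1) / 2 * 2 := by gcongr
    _ = |z| ^ (2 * k + 1) := by ring

lemma pow_two_mul_le_of_log_div_le {s ε : ℝ} (hs₀ : 0 < s) (hs₁ : s < 1) (hε : 0 < ε) {k : ℕ}
    (hk : Real.log (1 / ε) / (2 * Real.log (1 / s)) ≤ k) : s ^ (2 * k) ≤ ε := by
  have hlog : 0 < Real.log (1 / s) := Real.log_pos (one_lt_one_div hs₀ hs₁)
  rw [div_le_iff₀ (by positivity), one_div, one_div, Real.log_inv, Real.log_inv] at hk
  rw [← Real.log_le_log_iff (by positivity) hε, Real.log_pow]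
  push_cast
  linarith

/-- for `s ∈ (0,1/2)` and an integer `k ≥ 1`, `|z/√(1−z²) − S_k(z)| ≤ s^{2k+1}`
for all real `|z| ≤ s`; consequently, for every `ε ∈ (0,1)`, if `k ≥ log(1/ε)/(2·log(1/s))`
then `|z/√(1−z²) − S_k(z)| ≤ ε` for all `z ∈ [−s, s]`. -/
theorem stmt11 (s : ℝ) (hs : s ∈ Set.Ioo (0:ℝ) (1/2)) (k : ℕ) (hk : 1 ≤ k) :
    (∀ z : ℝ, |z| ≤ s → |z / Real.sqrt (1 - z ^ 2) - Sk k z| ≤ s ^ (2 * k + 1)) ∧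
    (∀ ε : ℝ, ε ∈ Set.Ioo (0:ℝ) 1 → Real.log (1 / ε) / (2 * Real.log (1 / s)) ≤ (k : ℝ) →
      ∀ z ∈ Set.Icc (-s) s, |z / Real.sqrt (1 - z ^ 2) - Sk k z| ≤ ε) := by
  obtain ⟨hs₀, hs₁⟩ := hs
  have hbound (z : ℝ) (hz : |z| ≤ s) : |z / √(1 - z ^ 2) - Sk k z| ≤ s ^ (2 * k + 1) := by
    have hz2 : z ^ 2 ≤ 1 / 2 := by nlinarith [sq_abs z, abs_nonneg z]
    exact (abs_div_sqrt_sub_Sk_le hz2 hk).trans (pow_le_pow_left₀ (abs_nonneg z) hz _)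
  refine ⟨hbound, fun ε hε hkε z hz ↦ (hbound z (abs_le.2 hz)).trans ?_⟩
  calc s ^ (2 * k + 1) ≤ s ^ (2 * k) := pow_le_pow_of_le_one hs₀.le (by linarith) (by omega)
    _ ≤ ε := pow_two_mul_le_of_log_div_le hs₀ (by linarith) hε.1 hkε
end

section
/- For every integer m ≥ 1, the normalized central binomial coefficient satisfies (2m)! / (4^m·(m!)²) ≤ 1/√(π·m); equivalently, binom(2m, m) ≤ 4^m / √(π·m). -/
/-!
With `s n = n! / (√(2n) (n/e)^n)` the Stirling sequence,
`(2m)! / (4^m (m!)²) = s(2m) / (s(m)² √m)`.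
Since `s` decreases on the positive integers to its limit `√π`, we have `s(2m) ≤ s(m)` and
`√π ≤ s(m)`, so the ratio is at most `1 / (s(m) √m) ≤ 1 / √(π m)`.
-/

open Real Nat

namespace Stirling

theorem stirlingSeq_antitoneOn : AntitoneOn stirlingSeq (Set.Ici 1) := by
  rintro (_ | a) ha (_ | b) hb hab
  · simp at ha
  · simp at ha
  · simp at hb
  · exact stirlingSeq'_antitone (Nat.succ_le_succ_iff.mp hab)

theorem factorial_eq_stirlingSeq_mul {n : ℕ} (hn : n ≠ 0) :
    (n ! : ℝ) = stirlingSeq n * (√(2 * n) * (n / exp 1) ^ n) := by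
  rw [stirlingSeq, div_mul_cancel₀]
  positivity

theorem factorial_two_mul_div_four_pow_mul_factorial_sq {m : ℕ} (hm : m ≠ 0) :
    ((2 * m)! : ℝ) / (4 ^ m * (m ! : ℝ) ^ 2)
      = stirlingSeq (2 * m) / (stirlingSeq m ^ 2 * √m) := by
  rw [factorial_eq_stirlingSeq_mul hm, factorial_eq_stirlingSeq_mul (by omega)]
  push_cast
  rw [show (2 * (2 * m) : ℝ) = 2 ^ 2 * m by ring, sqrt_mul (by positivity), sqrt_sq zero_le_two,
    pow_mul]
  field_simp
  rw [sq_sqrt (by positivity), sq_sqrt (by positivity)]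
  ring

end Stirling

open Stirling in
theorem factorial_two_mul_div_four_pow_mul_factorial_sq_le {m : ℕ} (hm : m ≠ 0) :
    ((2 * m)! : ℝ) / (4 ^ m * (m ! : ℝ) ^ 2) ≤ 1 / √(π * m) := by
  calc ((2 * m)! : ℝ) / (4 ^ m * (m ! : ℝ) ^ 2)
      = stirlingSeq (2 * m) / (stirlingSeq m ^ 2 * √m) :=
        factorial_two_mul_div_four_pow_mul_factorial_sq hm
    _ ≤ stirlingSeq m / (stirlingSeq m ^ 2 * √m) := by
        gcongr
        exact stirlingSeq_antitoneOn (Nat.one_le_iff_ne_zero.mpr hm)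
          (Nat.one_le_iff_ne_zero.mpr (by omega)) (by omega)
    _ = 1 / (stirlingSeq m * √m) := by field_simp
    _ ≤ 1 / (√π * √m) := by gcongr; exact sqrt_pi_le_stirlingSeq hm
    _ = 1 / √(π * m) := by rw [sqrt_mul pi_pos.le]

theorem cast_choose_two_mul_le {m : ℕ} (hm : m ≠ 0) :
    ((2 * m).choose m : ℝ) ≤ 4 ^ m / √(π * m) := by
  have hchoose : ((2 * m).choose m : ℝ) = 4 ^ m * (((2 * m)! : ℝ) / (4 ^ m * (m ! : ℝ) ^ 2)) := by
    rw [Nat.cast_choose ℝ (by omega : m ≤ 2 * m), show 2 * m - m = m by omega]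
    field_simp
  rw [hchoose, ← mul_one_div (4 ^ m : ℝ)]
  exact mul_le_mul_of_nonneg_left (factorial_two_mul_div_four_pow_mul_factorial_sq_le hm)
    (by positivity)

/-- for every integer `m ≥ 1`, the normalized central binomial coefficient
satisfies `(2m)!/(4^m·(m!)²) ≤ 1/√(π·m)`; equivalently, `binom(2m,m) ≤ 4^m/√(π·m)`. -/
theorem stmt13 (m : ℕ) (hm : 1 ≤ m) :
    (Nat.factorial (2 * m) : ℝ) / (4 ^ m * (Nat.factorial m : ℝ) ^ 2)
        ≤ 1 / Real.sqrt (Real.pi * m) ∧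
    (Nat.choose (2 * m) m : ℝ) ≤ 4 ^ m / Real.sqrt (Real.pi * m) := by
  have hm₀ : m ≠ 0 := Nat.one_le_iff_ne_zero.mp hm
  exact ⟨factorial_two_mul_div_four_pow_mul_factorial_sq_le hm₀, cast_choose_two_mul_le hm₀⟩
end

section
/- There exist constants C_1, C_2 > 0 depending only on h, J, g, α and k (and not on n) such that for every integer n ≥ 3, C_1·n ≤ α_comm^{(2k+1)} ≤ C_2·n. -/
/-- The spectral (ℓ²-operator) norm of a complex matrix. -/
noncomputable def specNorm {m n : Type*} [Fintype m] [Fintype n] [DecidableEq n]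
    (A : Matrix m n ℂ) : ℝ :=
  ‖LinearMap.toContinuousLinearMap (Matrix.toEuclideanLin A)‖

/-- The Pauli `Z` operator acting on the `i`-th factor of the `n`-qubit space
`(ℂ²)^{⊗n} ≅ ℂ^{2^n}` (identified with `ℂ^{Fin n → Fin 2}`), identity elsewhere. -/
def qubitZ (n : ℕ) (i : Fin n) : Matrix (Fin n → Fin 2) (Fin n → Fin 2) ℂ :=
  Matrix.diagonal fun x => if x i = 0 then 1 else -1

/-- The Pauli `X` operator acting on the `i`-th factor of the `n`-qubit space, identity
elsewhere: it flips the `i`-th bit. -/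
def qubitX (n : ℕ) (i : Fin n) : Matrix (Fin n → Fin 2) (Fin n → Fin 2) ℂ :=
  Matrix.of fun x y => if y = Function.update x i (x i + 1) then 1 else 0
/-- The cyclic successor of a site: site `n+1` means site `1`. -/
def nextSite {n : ℕ} (i : Fin n) : Fin n :=
  ⟨(i.val + 1) % n, Nat.mod_lt _ (Nat.lt_of_le_of_lt (Nat.zero_le _) i.isLt)⟩

/-- Index set for the family `S`: the terms `h·Z_i`, the terms `J·X_i·X_{i+1}`, and the
terms `(g/n)·|i−j|^{−α}·Z_i·Z_j` for `i < j` (counted with multiplicity). -/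
abbrev SIdx (n : ℕ) := Fin n ⊕ Fin n ⊕ {p : Fin n × Fin n // p.1 < p.2}

/-- The member of the family `S` with the given index. -/
noncomputable def SOp (n : ℕ) (h J g α : ℝ) :
    SIdx n → Matrix (Fin n → Fin 2) (Fin n → Fin 2) ℂ
  | Sum.inl i => (h : ℂ) • qubitZ n i
  | Sum.inr (Sum.inl i) => (J : ℂ) • (qubitX n i * qubitX n (nextSite i))
  | Sum.inr (Sum.inr p) =>
      ((g / n * |((p.val.1 : ℕ) : ℝ) - ((p.val.2 : ℕ) : ℝ)| ^ (-α) : ℝ) : ℂ) •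
        (qubitZ n p.val.1 * qubitZ n p.val.2)

/-- The nested commutator `[A_1,[A_2,[…,[A_r, B]…]]]` of a list `[A_1,…,A_r]` applied to `B`. -/
noncomputable def nestedComm {ι : Type*} [Fintype ι] [DecidableEq ι]
    (l : List (Matrix ι ι ℂ)) (B : Matrix ι ι ℂ) : Matrix ι ι ℂ :=
  l.foldr (fun A acc => A * acc - acc * A) B

/-- `α_comm^{(2k+1)} = Σ` over all ordered `(2k+1)`-tuples `(S_1,…,S_{2k+1})` of members of
the family `S` of the spectral norm of `[S_1,[S_2,[…,[S_{2k}, S_{2k+1}]…]]]`. -/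
noncomputable def alphaComm (n : ℕ) (h J g α : ℝ) (k : ℕ) : ℝ :=
  ∑ f : Fin (2 * k + 1) → SIdx n,
    specNorm (nestedComm
      ((List.finRange (2 * k)).map fun j => SOp n h J g α (f j.castSucc))
      (SOp n h J g α (f (Fin.last (2 * k)))))

/-!
Every member of `S` is a weighted shift, the matrix with entry `φ(x)` at `(x, x + t)` on
`ℂ^{Fin n → Fin 2}`, and commutators of weighted shifts are again weighted shifts. The spectral
norm of a weighted shift lies between any `|φ(x)|` and `sup |φ|`, so everything reduces to weights.

Upper bound: `[A, B]` vanishes when the supports of `A` and `B` are disjoint, and its weight is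
at most `2 ‖A‖ ‖B‖` in any case. Along a nested commutator the support of the inner part grows by
at most two sites per step, and the members of `S` touching a fixed site have coefficients summing
to at most `h + 2J + 2g` (each long-range coefficient is at most `g / n`). So for a fixed
innermost term the sum over the other `2k` terms is at most a constant times its coefficient,
and the coefficients of all members of `S` add up to `O(n)`.

Lower bound: `Z_i` anticommutes with `X_i X_{i+1}`, so
`[h Z_i, [h Z_i, …, [h Z_i, J X_i X_{i+1}]…]] = (2h)^{2k} J X_i X_{i+1}`, one such tuple per site.
-/

open Finset

@[ext]
structure WeightedShift (G : Type*) where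
  weight : G → ℂ
  shift : G

namespace WeightedShift

section Shift

variable {G : Type*} [AddCommGroup G]

def toMatrix [DecidableEq G] (p : WeightedShift G) : Matrix G G ℂ :=
  Matrix.of fun x y => if y = x + p.shift then p.weight x else 0

@[simps]
def comp (p q : WeightedShift G) : WeightedShift G :=
  ⟨fun x => p.weight x * q.weight (x + p.shift), p.shift + q.shift⟩

@[simps]
def bracket (p q : WeightedShift G) : WeightedShift G :=
  ⟨fun x => p.weight x * q.weight (x + p.shift) - q.weight x * p.weight (x + q.shift),
    p.shift + q.shift⟩

section Matrix

variable [Fintype G] [DecidableEq G]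

theorem toMatrix_mul (p q : WeightedShift G) : p.toMatrix * q.toMatrix = (p.comp q).toMatrix := by
  ext x z
  simp only [toMatrix, Matrix.mul_apply, Matrix.of_apply, ite_mul, zero_mul, sum_ite_eq',
    mem_univ, if_true]
  simp [add_assoc]

theorem toMatrix_commutator (p q : WeightedShift G) :
    p.toMatrix * q.toMatrix - q.toMatrix * p.toMatrix = (p.bracket q).toMatrix := by
  rw [toMatrix_mul, toMatrix_mul]
  ext x y
  simp only [toMatrix, Matrix.sub_apply, Matrix.of_apply, comp_weight, comp_shift, bracket_weight,
    bracket_shift, add_comm q.shift]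
  split_ifs <;> simp

theorem nestedComm_map_toMatrix (L : List (WeightedShift G)) (q : WeightedShift G) :
    nestedComm (L.map toMatrix) q.toMatrix = (L.foldr bracket q).toMatrix := by
  induction L with
  | nil => rfl
  | cons p L ih =>
    rw [List.foldr_cons, ← toMatrix_commutator, ← ih]
    rfl

omit [Fintype G] in
theorem smul_toMatrix (c : ℂ) (p : WeightedShift G) :
    c • p.toMatrix = (⟨c • p.weight, p.shift⟩ : WeightedShift G).toMatrix := by
  ext x y
  simp only [toMatrix, Matrix.smul_apply, Matrix.of_apply, Pi.smul_apply]
  split_ifs <;> simp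

theorem toEuclideanLin_toMatrix_apply (p : WeightedShift G) (v : EuclideanSpace ℂ G) (x : G) :
    Matrix.toEuclideanLin p.toMatrix v x = p.weight x * v (x + p.shift) := by
  simp [Matrix.toLpLin_apply, Matrix.mulVec, dotProduct, toMatrix]

theorem specNorm_toMatrix_le (p : WeightedShift G) : specNorm p.toMatrix ≤ ‖p.weight‖ := by
  refine ContinuousLinearMap.opNorm_le_bound _ (norm_nonneg _) fun v => ?_
  rw [LinearMap.coe_toContinuousLinearMap', EuclideanSpace.norm_eq, EuclideanSpace.norm_eq,
    ← Real.sqrt_sq (norm_nonneg p.weight), ← Real.sqrt_mul (sq_nonneg _)]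
  refine Real.sqrt_le_sqrt ?_
  rw [← Equiv.sum_comp (Equiv.addRight p.shift) (fun y => ‖v y‖ ^ 2), mul_sum]
  refine sum_le_sum fun x _ => ?_
  rw [toEuclideanLin_toMatrix_apply, norm_mul, mul_pow, Equiv.coe_addRight]
  gcongr
  exact norm_le_pi_norm p.weight x

theorem norm_weight_le_specNorm (p : WeightedShift G) (x : G) :
    ‖p.weight x‖ ≤ specNorm p.toMatrix := by
  have hv := ContinuousLinearMap.le_opNorm
    (LinearMap.toContinuousLinearMap (Matrix.toEuclideanLin p.toMatrix))
    (EuclideanSpace.single (x + p.shift) 1)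
  rw [PiLp.norm_single, norm_one, mul_one] at hv
  refine le_trans (le_of_eq ?_) ((PiLp.norm_apply_le _ x).trans hv)
  simp [toEuclideanLin_toMatrix_apply]

end Matrix

theorem norm_bracket_weight_le [Fintype G] (p q : WeightedShift G) :
    ‖(p.bracket q).weight‖ ≤ 2 * ‖p.weight‖ * ‖q.weight‖ := by
  rw [pi_norm_le_iff_of_nonneg (by positivity)]
  intro x
  calc ‖(p.bracket q).weight x‖
      ≤ ‖p.weight x‖ * ‖q.weight (x + p.shift)‖ + ‖q.weight x‖ * ‖p.weight (x + q.shift)‖ := by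
        rw [bracket_weight, ← norm_mul, ← norm_mul]
        exact norm_sub_le _ _
    _ ≤ ‖p.weight‖ * ‖q.weight‖ + ‖q.weight‖ * ‖p.weight‖ := by
        gcongr <;> exact norm_le_pi_norm _ _
    _ = 2 * ‖p.weight‖ * ‖q.weight‖ := by ring

theorem bracket_of_anticommute {p q : WeightedShift G} (hp : p.shift = 0)
    (hpq : ∀ x, p.weight (x + q.shift) = -p.weight x) :
    p.bracket q = ⟨fun x => 2 * p.weight x * q.weight x, q.shift⟩ := by
  ext x
  · simp only [bracket_weight, hp, add_zero, hpq]
    ring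
  · simp [hp]

theorem foldr_replicate_bracket {p q : WeightedShift G} (hp : p.shift = 0)
    (hpq : ∀ x, p.weight (x + q.shift) = -p.weight x) (m : ℕ) :
    (List.replicate m p).foldr bracket q
      = ⟨fun x => (2 * p.weight x) ^ m * q.weight x, q.shift⟩ := by
  induction m with
  | zero => simp
  | succ m ih =>
    rw [List.replicate_succ, List.foldr_cons, ih,
      bracket_of_anticommute (q := ⟨fun x => (2 * p.weight x) ^ m * q.weight x, q.shift⟩) hp hpq]
    congr 1
    funext x
    ring

end Shift

section Support

variable {ι A : Type*} [AddCommGroup A]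

structure SupportedOn (p : WeightedShift (ι → A)) (T : Finset ι) : Prop where
  weight_congr : ∀ x y : ι → A, (∀ i ∈ T, x i = y i) → p.weight x = p.weight y
  shift_eq_zero : ∀ i ∉ T, p.shift i = 0

namespace SupportedOn

variable {p q : WeightedShift (ι → A)} {S T : Finset ι}

theorem weight_add (hp : p.SupportedOn T) (x : ι → A) {t : ι → A} (ht : ∀ i ∈ T, t i = 0) :
    p.weight (x + t) = p.weight x :=
  hp.weight_congr _ _ fun i hi => by simp [ht i hi]

theorem mono (hp : p.SupportedOn S) (h : S ⊆ T) : p.SupportedOn T :=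
  ⟨fun x y hxy => hp.weight_congr x y fun i hi => hxy i (h hi),
    fun i hi => hp.shift_eq_zero i fun hS => hi (h hS)⟩

theorem bracket [DecidableEq ι] (hp : p.SupportedOn S) (hq : q.SupportedOn T) :
    (p.bracket q).SupportedOn (S ∪ T) where
  weight_congr x y hxy := by
    have hS : ∀ i ∈ S, x i = y i := fun i hi => hxy i (mem_union_left T hi)
    have hT : ∀ i ∈ T, x i = y i := fun i hi => hxy i (mem_union_right S hi)
    simp only [bracket_weight]
    rw [hp.weight_congr x y hS, hq.weight_congr x y hT,
      hq.weight_congr (x + p.shift) (y + p.shift) fun i hi => by simp [hT i hi],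
      hp.weight_congr (x + q.shift) (y + q.shift) fun i hi => by simp [hS i hi]]
  shift_eq_zero i hi := by
    rw [mem_union, not_or] at hi
    simp [hp.shift_eq_zero i hi.1, hq.shift_eq_zero i hi.2]

theorem bracket_weight_eq_zero (hp : p.SupportedOn S) (hq : q.SupportedOn T) (h : Disjoint S T) :
    (p.bracket q).weight = 0 := by
  funext x
  rw [bracket_weight,
    hq.weight_add x fun i hi => hp.shift_eq_zero i (h.notMem_of_mem_right_finset hi),
    hp.weight_add x fun i hi => hq.shift_eq_zero i (h.notMem_of_mem_left_finset hi),
    mul_comm, sub_self, Pi.zero_apply]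

theorem foldr_bracket [DecidableEq ι] {L : List (WeightedShift (ι → A))}
    (hL : ∀ p ∈ L, p.SupportedOn T) (hq : q.SupportedOn T) :
    (L.foldr WeightedShift.bracket q).SupportedOn T := by
  induction L with
  | nil => exact hq
  | cons p L ih =>
    exact ((hL p List.mem_cons_self).bracket (ih fun p hp => hL p (List.mem_cons_of_mem _ hp))).mono
      (union_self T).subset

end SupportedOn

end Support

section Locality

variable {σ ι A : Type*} [Fintype σ] [Fintype ι] [DecidableEq ι] [AddCommGroup A] [Fintype A]
  {s : σ → WeightedShift (ι → A)} {supp : σ → Finset ι} {c : σ → ℝ} {K : ℝ}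

theorem sum_norm_bracket_weight_le (hs : ∀ a, (s a).SupportedOn (supp a))
    (hc : ∀ a, ‖(s a).weight‖ ≤ c a) (hK : ∀ u, ∑ a with u ∈ supp a, c a ≤ K) (hK0 : 0 ≤ K)
    {q : WeightedShift (ι → A)} {U : Finset ι} (hq : q.SupportedOn U) {D : ℕ} (hU : #U ≤ D) :
    ∑ a, ‖((s a).bracket q).weight‖ ≤ 2 * K * D * ‖q.weight‖ := by
  have hc0 a : 0 ≤ c a := (norm_nonneg _).trans (hc a)
  -- a bracket with `q` survives only if `s a` touches a site of `U`
  have hterm a : ‖((s a).bracket q).weight‖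
      ≤ 2 * ‖q.weight‖ * ∑ u ∈ U, if u ∈ supp a then c a else 0 := by
    by_cases h : Disjoint (supp a) U
    · rw [(hs a).bracket_weight_eq_zero hq h, norm_zero]
      exact mul_nonneg (by positivity) (sum_nonneg fun u _ => by split_ifs <;> simp [hc0])
    · obtain ⟨u, hua, huU⟩ := not_disjoint_iff.1 h
      calc ‖((s a).bracket q).weight‖ ≤ 2 * ‖(s a).weight‖ * ‖q.weight‖ :=
            norm_bracket_weight_le _ _
        _ ≤ 2 * ‖q.weight‖ * c a := by rw [mul_right_comm]; gcongr; exact hc a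
        _ ≤ 2 * ‖q.weight‖ * ∑ u ∈ U, if u ∈ supp a then c a else 0 := by
            gcongr
            refine (if_pos hua).symm.le.trans
              (single_le_sum (f := fun u => if u ∈ supp a then c a else 0) (fun u _ => ?_) huU)
            split_ifs <;> simp [hc0]
  calc ∑ a, ‖((s a).bracket q).weight‖
      ≤ ∑ a, 2 * ‖q.weight‖ * ∑ u ∈ U, if u ∈ supp a then c a else 0 :=
        sum_le_sum fun a _ => hterm a
    _ = ∑ u ∈ U, 2 * ‖q.weight‖ * ∑ a with u ∈ supp a, c a := by
        simp_rw [← mul_sum, sum_filter]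
        rw [sum_comm]
    _ ≤ ∑ _u ∈ U, 2 * ‖q.weight‖ * K := by gcongr with u; exact hK u
    _ = 2 * K * #U * ‖q.weight‖ := by rw [sum_const, nsmul_eq_mul]; ring
    _ ≤ 2 * K * D * ‖q.weight‖ := by gcongr

theorem sum_norm_foldr_bracket_le (hs : ∀ a, (s a).SupportedOn (supp a))
    (hc : ∀ a, ‖(s a).weight‖ ≤ c a) (hK : ∀ u, ∑ a with u ∈ supp a, c a ≤ K) (hK0 : 0 ≤ K)
    {r : ℕ} (hr : ∀ a, #(supp a) ≤ r) {q : WeightedShift (ι → A)} {Q : Finset ι}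
    (hq : q.SupportedOn Q) {D : ℕ} (m : ℕ) (hD : #Q + r * m ≤ D) :
    ∑ f : Fin m → σ, ‖((List.ofFn (s ∘ f)).foldr bracket q).weight‖
      ≤ (2 * K * D) ^ m * ‖q.weight‖ := by
  induction m with
  | zero => simp
  | succ m ih =>
    have hU (ℓ : Fin m → σ) : #(Q ∪ univ.biUnion (supp ∘ ℓ)) ≤ D := by
      calc #(Q ∪ univ.biUnion (supp ∘ ℓ)) ≤ #Q + ∑ j, #(supp (ℓ j)) :=
            (card_union_le _ _).trans (Nat.add_le_add_left card_biUnion_le _)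
        _ ≤ #Q + r * m := by
            gcongr
            exact (sum_le_sum fun j _ => hr (ℓ j)).trans (by simp [mul_comm])
        _ ≤ D := by linarith
    have hsupp (ℓ : Fin m → σ) :
        ((List.ofFn (s ∘ ℓ)).foldr bracket q).SupportedOn (Q ∪ univ.biUnion (supp ∘ ℓ)) := by
      refine SupportedOn.foldr_bracket (fun p hp => ?_) (hq.mono subset_union_left)
      obtain ⟨j, rfl⟩ := List.mem_ofFn.1 hp
      exact (hs (ℓ j)).mono ((subset_biUnion_of_mem (supp ∘ ℓ) (mem_univ j)).trans
        subset_union_right)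
    calc ∑ f : Fin (m + 1) → σ, ‖((List.ofFn (s ∘ f)).foldr bracket q).weight‖
        = ∑ ℓ : Fin m → σ, ∑ a, ‖((s a).bracket ((List.ofFn (s ∘ ℓ)).foldr bracket q)).weight‖ := by
          rw [← (Fin.consEquiv fun _ => σ).sum_comp, Fintype.sum_prod_type, sum_comm]
          simp [Fin.consEquiv, List.ofFn_succ, Function.comp_def]
      _ ≤ ∑ ℓ : Fin m → σ, 2 * K * D * ‖((List.ofFn (s ∘ ℓ)).foldr bracket q).weight‖ :=
          sum_le_sum fun ℓ _ => sum_norm_bracket_weight_le hs hc hK hK0 (hsupp ℓ) (hU ℓ)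
      _ ≤ 2 * K * D * ((2 * K * D) ^ m * ‖q.weight‖) := by
          rw [← mul_sum]
          gcongr
          exact ih (by linarith)
      _ = (2 * K * D) ^ (m + 1) * ‖q.weight‖ := by ring

theorem sum_le_card_mul_of_forall_sum_filter_le (hne : ∀ a, (supp a).Nonempty)
    (hc0 : ∀ a, 0 ≤ c a) (hK : ∀ u, ∑ a with u ∈ supp a, c a ≤ K) :
    ∑ a, c a ≤ Fintype.card ι * K :=
  calc ∑ a, c a ≤ ∑ a, ∑ _u ∈ supp a, c a :=
        sum_le_sum fun a _ => by
          rw [sum_const, nsmul_eq_mul]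
          exact le_mul_of_one_le_left (hc0 a) (by exact_mod_cast (hne a).card_pos)
    _ = ∑ u, ∑ a with u ∈ supp a, c a := sum_comm' fun a u => by simp
    _ ≤ Fintype.card ι * K := by
        rw [← nsmul_eq_mul, ← card_univ]
        exact sum_le_card_nsmul _ _ _ fun u _ => hK u

theorem sum_specNorm_nestedComm_le [DecidableEq A] (hs : ∀ a, (s a).SupportedOn (supp a))
    (hc : ∀ a, ‖(s a).weight‖ ≤ c a) (hK : ∀ u, ∑ a with u ∈ supp a, c a ≤ K) (hK0 : 0 ≤ K)
    {r : ℕ} (hr : ∀ a, #(supp a) ≤ r) (hne : ∀ a, (supp a).Nonempty) (m : ℕ) :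
    ∑ f : Fin (m + 1) → σ, specNorm (nestedComm
        ((List.finRange m).map fun j => (s (f j.castSucc)).toMatrix) (s (f (Fin.last m))).toMatrix)
      ≤ Fintype.card ι * K * (2 * K * (r * (m + 1) : ℕ)) ^ m := by
  have hc0 a : 0 ≤ c a := (norm_nonneg _).trans (hc a)
  rw [← (Fin.snocEquiv fun _ => σ).sum_comp, Fintype.sum_prod_type]
  calc ∑ a, ∑ ℓ : Fin m → σ, specNorm (nestedComm
          ((List.finRange m).map fun j =>
            (s (Fin.snocEquiv (fun _ => σ) (a, ℓ) j.castSucc)).toMatrix)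
          (s (Fin.snocEquiv (fun _ => σ) (a, ℓ) (Fin.last m))).toMatrix)
      ≤ ∑ a, ∑ ℓ : Fin m → σ, ‖((List.ofFn (s ∘ ℓ)).foldr bracket (s a)).weight‖ := by
        gcongr with a _ ℓ
        simp only [Fin.snocEquiv, Equiv.coe_fn_mk, Fin.snoc_castSucc, Fin.snoc_last]
        have hmap : (List.finRange m).map (fun j => (s (ℓ j)).toMatrix)
            = (List.ofFn (s ∘ ℓ)).map toMatrix := by
          simp [List.ofFn_eq_map]
        rw [hmap, nestedComm_map_toMatrix]
        exact specNorm_toMatrix_le _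
    _ ≤ ∑ a, (2 * K * (r * (m + 1) : ℕ)) ^ m * c a := by
        gcongr with a
        refine (sum_norm_foldr_bracket_le (D := r * (m + 1)) hs hc hK hK0 hr (hs a) m ?_).trans ?_
        · linarith [hr a]
        · gcongr
          exact hc a
    _ ≤ Fintype.card ι * K * (2 * K * (r * (m + 1) : ℕ)) ^ m := by
        rw [← mul_sum, mul_comm]
        gcongr
        exact sum_le_card_mul_of_forall_sum_filter_le hne hc0 hK

end Locality

end WeightedShift

section TransverseFieldIsing

open WeightedShift

theorem nextSite_eq_finRotate {n : ℕ} (i : Fin n) : nextSite i = finRotate n i := by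
  have := i.neZero
  ext
  simp [nextSite, Fin.val_add]

theorem nextSite_ne {n : ℕ} (hn : 2 ≤ n) (i : Fin n) : nextSite i ≠ i := by
  rw [nextSite_eq_finRotate, ← Equiv.Perm.mem_support, support_finRotate_of_le hn]
  exact mem_univ i

def zSign {n : ℕ} (i : Fin n) (x : Fin n → Fin 2) : ℂ := if x i = 0 then 1 else -1

theorem norm_zSign {n : ℕ} (i : Fin n) (x : Fin n → Fin 2) : ‖zSign i x‖ = 1 := by
  unfold zSign; split_ifs <;> simp

theorem zSign_add_of_apply_eq_one {n : ℕ} {i : Fin n} {t : Fin n → Fin 2} (ht : t i = 1)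
    (x : Fin n → Fin 2) : zSign i (x + t) = -zSign i x := by
  unfold zSign
  rw [Pi.add_apply, ht]
  rcases Fin.exists_fin_two.1 ⟨x i, rfl⟩ with h | h <;> simp [h]

theorem zSign_congr {n : ℕ} {i : Fin n} {x y : Fin n → Fin 2} (h : x i = y i) :
    zSign i x = zSign i y := by
  simp [zSign, h]

theorem qubitZ_eq_toMatrix {n : ℕ} (i : Fin n) :
    qubitZ n i = (⟨zSign i, 0⟩ : WeightedShift (Fin n → Fin 2)).toMatrix := by
  ext x y
  simp only [qubitZ, toMatrix, Matrix.diagonal_apply, Matrix.of_apply, add_zero, zSign, eq_comm]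

theorem qubitX_eq_toMatrix {n : ℕ} (i : Fin n) :
    qubitX n i = (⟨1, Pi.single i 1⟩ : WeightedShift (Fin n → Fin 2)).toMatrix := by
  have hupd (x : Fin n → Fin 2) : Function.update x i (x i + 1) = x + Pi.single i 1 := by
    ext j
    by_cases hj : j = i
    · subst hj; simp
    · simp [hj]
  ext x y
  simp only [qubitX, toMatrix, Matrix.of_apply, hupd, Pi.one_apply]

noncomputable def isingTerm (n : ℕ) (h J g α : ℝ) : SIdx n → WeightedShift (Fin n → Fin 2)
  | .inl i => ⟨fun x => h * zSign i x, 0⟩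
  | .inr (.inl i) => ⟨fun _ => J, Pi.single i 1 + Pi.single (nextSite i) 1⟩
  | .inr (.inr p) =>
      ⟨fun x => ((g / n * |((p.val.1 : ℕ) : ℝ) - ((p.val.2 : ℕ) : ℝ)| ^ (-α) : ℝ) : ℂ) *
        (zSign p.val.1 x * zSign p.val.2 x), 0⟩

theorem SOp_eq_toMatrix (n : ℕ) (h J g α : ℝ) (a : SIdx n) :
    SOp n h J g α a = (isingTerm n h J g α a).toMatrix := by
  rcases a with i | i | p
  · rw [SOp, qubitZ_eq_toMatrix, smul_toMatrix]; rfl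
  · rw [SOp, qubitX_eq_toMatrix, qubitX_eq_toMatrix, toMatrix_mul, smul_toMatrix]
    congr 1; ext x <;> simp [isingTerm]
  · rw [SOp, qubitZ_eq_toMatrix, qubitZ_eq_toMatrix, toMatrix_mul, smul_toMatrix]
    congr 1; ext x <;> simp [isingTerm]

def isingSupport {n : ℕ} : SIdx n → Finset (Fin n)
  | .inl i => {i}
  | .inr (.inl i) => {i, nextSite i}
  | .inr (.inr p) => {p.val.1, p.val.2}

/-- `g / n` bounds the long-range coefficients because `|i - j| ≥ 1` and `α ≥ 0`. -/
noncomputable def isingBound (n : ℕ) (h J g : ℝ) : SIdx n → ℝ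
  | .inl _ => h
  | .inr (.inl _) => J
  | .inr (.inr _) => g / n

theorem card_isingSupport_le {n : ℕ} (a : SIdx n) : #(isingSupport a) ≤ 2 := by
  rcases a with i | i | p
  · simp [isingSupport]
  · exact card_le_two
  · exact card_le_two

theorem isingSupport_nonempty {n : ℕ} (a : SIdx n) : (isingSupport a).Nonempty := by
  rcases a with i | i | p <;> simp [isingSupport]

theorem supportedOn_isingSupport (n : ℕ) (h J g α : ℝ) (a : SIdx n) :
    (isingTerm n h J g α a).SupportedOn (isingSupport a) := by
  rcases a with i | i | p
  · exact ⟨fun x y hxy => by simp [isingTerm, zSign_congr (hxy i (by simp [isingSupport]))],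
      fun _ _ => rfl⟩
  · refine ⟨fun _ _ _ => rfl, fun j hj => ?_⟩
    simp only [isingSupport, mem_insert, mem_singleton, not_or] at hj
    simp [isingTerm, hj.1, hj.2]
  · exact ⟨fun x y hxy => by
      simp [isingTerm, zSign_congr (hxy p.val.1 (by simp [isingSupport])),
        zSign_congr (hxy p.val.2 (by simp [isingSupport]))], fun _ _ => rfl⟩

theorem rpow_neg_abs_natCast_sub_le_one {α : ℝ} (hα : 0 ≤ α) {i j : ℕ} (hij : i < j) :
    |(i : ℝ) - j| ^ (-α) ≤ 1 := by
  refine Real.rpow_le_one_of_one_le_of_nonpos ?_ (neg_nonpos.2 hα)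
  rw [abs_sub_comm, abs_of_nonneg (by simpa using hij.le)]
  have : (i : ℝ) + 1 ≤ j := by exact_mod_cast hij
  linarith

theorem norm_isingTerm_weight_le {n : ℕ} {h J g α : ℝ} (hh : 0 ≤ h) (hJ : 0 ≤ J) (hg : 0 ≤ g)
    (hα : 0 ≤ α) (a : SIdx n) : ‖(isingTerm n h J g α a).weight‖ ≤ isingBound n h J g a := by
  rcases a with i | i | p
  · refine (pi_norm_le_iff_of_nonneg hh).2 fun x => ?_
    simp [isingTerm, norm_zSign, abs_of_nonneg hh]
  · refine (pi_norm_le_iff_of_nonneg hJ).2 fun x => ?_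
    simp [isingTerm, abs_of_nonneg hJ]
  · have hgn : 0 ≤ g / n := by positivity
    refine (pi_norm_le_iff_of_nonneg hgn).2 fun x => ?_
    have hd := rpow_neg_abs_natCast_sub_le_one hα p.prop
    simp only [isingTerm, norm_mul, norm_zSign, mul_one, Complex.norm_real, Real.norm_eq_abs]
    rw [abs_of_nonneg hgn, abs_of_nonneg (Real.rpow_nonneg (abs_nonneg _) _)]
    exact mul_le_of_le_one_right hgn hd

theorem ite_or_le_add {P Q : Prop} [Decidable P] [Decidable Q] {c : ℝ} (hc : 0 ≤ c) :
    (if P ∨ Q then c else 0) ≤ (if P then c else 0) + (if Q then c else 0) := by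
  split_ifs <;> simp_all

theorem sum_isingBound_le {n : ℕ} (h : ℝ) {J g : ℝ} (hJ : 0 ≤ J) (hg : 0 ≤ g) (u : Fin n) :
    ∑ a with u ∈ isingSupport a, isingBound n h J g a ≤ h + 2 * J + 2 * g := by
  have hn : (n : ℝ) ≠ 0 := by have := u.pos; positivity
  rw [sum_filter, Fintype.sum_sum_type, Fintype.sum_sum_type]
  simp only [isingSupport, isingBound, mem_singleton, mem_insert]
  have hZ : ∑ i : Fin n, (if u = i then h else 0) = h := by simp
  have hXX : ∑ i : Fin n, (if u = i ∨ u = nextSite i then J else 0) ≤ 2 * J :=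
    calc _ ≤ ∑ i : Fin n, ((if u = i then J else 0) + if u = finRotate n i then J else 0) := by
          simp_rw [nextSite_eq_finRotate]
          exact sum_le_sum fun i _ => ite_or_le_add hJ
      _ = 2 * J := by
          rw [sum_add_distrib, Equiv.sum_comp (finRotate n) fun j => if u = j then J else 0]
          simp; ring
  have hZZ : ∑ p : {p : Fin n × Fin n // p.1 < p.2},
      (if u = p.val.1 ∨ u = p.val.2 then g / n else 0) ≤ 2 * g :=
    calc _ ≤ ∑ p : Fin n × Fin n,
          ((if u = p.1 then g / n else 0) + if u = p.2 then g / n else 0) := by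
          refine (sum_map univ (Function.Embedding.subtype _)
            fun p : Fin n × Fin n => if u = p.1 ∨ u = p.2 then g / n else 0).symm.le.trans ?_
          refine (sum_le_univ_sum_of_nonneg fun p => by positivity).trans ?_
          exact sum_le_sum fun p _ => ite_or_le_add (by positivity)
      _ = 2 * g := by
          rw [sum_add_distrib, Fintype.sum_prod_type_right, Fintype.sum_prod_type]
          simp [mul_div_cancel₀ g hn]
          ring
  linarith

end TransverseFieldIsing

section Bounds

open WeightedShift

variable {n : ℕ} {h J g α : ℝ}

theorem le_specNorm_nestedComm_replicate (hh : 0 ≤ h) (hJ : 0 ≤ J) (hn : 2 ≤ n) (i : Fin n)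
    (m : ℕ) :
    (2 * h) ^ m * J ≤ specNorm (nestedComm (List.replicate m (SOp n h J g α (.inl i)))
      (SOp n h J g α (.inr (.inl i)))) := by
  have hshift : (Pi.single i 1 + Pi.single (nextSite i) 1 : Fin n → Fin 2) i = 1 := by
    simp [Ne.symm (nextSite_ne hn i)]
  have hflip (x : Fin n → Fin 2) :
      (isingTerm n h J g α (.inl i)).weight (x + (isingTerm n h J g α (.inr (.inl i))).shift)
        = -(isingTerm n h J g α (.inl i)).weight x := by
    simp only [isingTerm]
    rw [zSign_add_of_apply_eq_one hshift, mul_neg]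
  rw [SOp_eq_toMatrix, SOp_eq_toMatrix, ← List.map_replicate, nestedComm_map_toMatrix,
    foldr_replicate_bracket rfl hflip]
  refine le_trans (le_of_eq ?_) (norm_weight_le_specNorm _ 0)
  simp [isingTerm, norm_zSign, abs_of_nonneg hh, abs_of_nonneg hJ]

theorem le_alphaComm (hh : 0 ≤ h) (hJ : 0 ≤ J) (hn : 2 ≤ n) (k : ℕ) :
    n * ((2 * h) ^ (2 * k) * J) ≤ alphaComm n h J g α k := by
  let chain (i : Fin n) : Fin (2 * k + 1) → SIdx n := Fin.snoc (fun _ => .inl i) (.inr (.inl i))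
  have hinj : Function.Injective chain := fun i j hij => by
    simpa [chain] using congrFun hij (Fin.last _)
  let term (f : Fin (2 * k + 1) → SIdx n) : ℝ := specNorm (nestedComm
    ((List.finRange (2 * k)).map fun j => SOp n h J g α (f j.castSucc))
    (SOp n h J g α (f (Fin.last (2 * k)))))
  calc n * ((2 * h) ^ (2 * k) * J) = ∑ _i : Fin n, (2 * h) ^ (2 * k) * J := by simp
    _ ≤ ∑ i, term (chain i) := by
        gcongr with i
        simpa [term, chain, List.map_const'] using
          le_specNorm_nestedComm_replicate hh hJ hn i (2 * k)
    _ ≤ ∑ f, term f :=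
        (sum_map univ ⟨chain, hinj⟩ term).symm.le.trans
          (sum_le_univ_sum_of_nonneg fun _ => norm_nonneg _)

theorem alphaComm_le (hh : 0 ≤ h) (hJ : 0 ≤ J) (hg : 0 ≤ g) (hα : 0 ≤ α) (k : ℕ) :
    alphaComm n h J g α k ≤ n * (h + 2 * J + 2 * g) *
      (2 * (h + 2 * J + 2 * g) * (2 * (2 * k + 1) : ℕ)) ^ (2 * k) := by
  have := sum_specNorm_nestedComm_le (s := isingTerm n h J g α) (supportedOn_isingSupport n h J g α)
    (norm_isingTerm_weight_le hh hJ hg hα) (sum_isingBound_le h hJ hg) (by positivity)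
    card_isingSupport_le isingSupport_nonempty (2 * k)
  simpa [alphaComm, SOp_eq_toMatrix] using this

end Bounds

theorem stmt15_general (h J g α : ℝ) (hh : 0 < h) (hJ : 0 < J) (hg : 0 ≤ g) (hα : 1 < α)
    (k : ℕ) :
    ∃ C₁ C₂ : ℝ, 0 < C₁ ∧ 0 < C₂ ∧ ∀ n : ℕ, 3 ≤ n →
      C₁ * n ≤ alphaComm n h J g α k ∧ alphaComm n h J g α k ≤ C₂ * n := by
  set K := h + 2 * J + 2 * g
  refine ⟨(2 * h) ^ (2 * k) * J, K * (2 * K * (2 * (2 * k + 1) : ℕ)) ^ (2 * k), by positivity,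
    by positivity, fun n hn => ⟨?_, ?_⟩⟩
  · rw [mul_comm]
    exact le_alphaComm hh.le hJ.le (by omega) k
  · rw [mul_comm, ← mul_assoc]
    exact alphaComm_le hh.le hJ.le hg (by linarith) k

/-- there exist constants `C₁, C₂ > 0` depending only on `h, J, g, α, k`
(and not on `n`) such that for every integer `n ≥ 3`,
`C₁·n ≤ α_comm^{(2k+1)} ≤ C₂·n`. -/
theorem stmt15 (h J g α : ℝ) (hh : 0 < h) (hJ : 0 < J) (hg : 0 ≤ g) (hα : 1 < α)
    (k : ℕ) (hk : 1 ≤ k) :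
    ∃ C₁ C₂ : ℝ, 0 < C₁ ∧ 0 < C₂ ∧ ∀ n : ℕ, 3 ≤ n →
      C₁ * n ≤ alphaComm n h J g α k ∧ alphaComm n h J g α k ≤ C₂ * n :=
  stmt15_general h J g α hh hJ hg hα k
end
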